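/- Let n ≥ 3, let e₁,…,eₙ be the standard basis of ℝⁿ, and let γ₁, γ₂, γ₃ be real numbers satisfying the non-flatness condition (Γ). Define Π₁ = span(e₁,…,e_{n−1}), Π₂ = span(e₁,…,e_{n−2}, e_{n−1}+γ₁eₙ), Π₃ = span(e₁,…,e_{n−3}, e_{n−2}+γ₃eₙ, e_{n−1}+γ₂eₙ). Let σ₁, σ₂ be n×n real symmetric positive definite matrices and set gᵢ = (det σᵢ)^{1/(n−2)} · σᵢ⁻¹ for i = 1, 2. If ⟨g₁u, v⟩ = ⟨g₂u, v⟩ for all u, v ∈ Πₖ and each k = 1, 2, 3, then σ₁ = σ₂. -/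

import Mathlib

/-!
Put `D = g₁ - g₂`: a symmetric matrix whose bilinear form vanishes on `Π₁`, `Π₂` and `Π₃`.
On `Π₁` this kills the upper left `(n-1) × (n-1)` block; pairing `eᵢ` (`i ≤ n-2`) with
`e_{n-1} + γ₁ eₙ ∈ Π₂` kills the last row up to `x = D_{n,n-1}` and `y = D_{n,n}`; and the form
evaluated on the tilted generators of `Π₂` and `Π₃` gives linear equations in `x, y` that (Γ)
makes nondegenerate. Hence `g₁ = g₂`. Since `det gᵢ = (det σᵢ)^{2/(n-2)}`, the determinants of
`σ₁` and `σ₂` agree, so do the scalar factors, and finally `σ₁⁻¹ = σ₂⁻¹`.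
-/

open Matrix

lemma eq_zero_of_nonflat {γ₁ γ₂ γ₃ x y : ℝ}
    (hΓ : (γ₁ ≠ 0 ∧ γ₃ ≠ 0) ∨ (γ₁ ≠ 0 ∧ γ₃ = 0 ∧ γ₂ ≠ 0 ∧ γ₁ ≠ γ₂))
    (h₁ : 2 * γ₁ * x + γ₁ ^ 2 * y = 0) (h₂ : 2 * γ₂ * x + γ₂ ^ 2 * y = 0)
    (h₃ : γ₃ ^ 2 * y = 0) (h₄ : γ₃ * x + γ₃ * γ₂ * y = 0) : x = 0 ∧ y = 0 := by
  rcases hΓ with ⟨-, hγ₃⟩ | ⟨hγ₁, -, hγ₂, hγ₁₂⟩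
  · have hy : y = 0 := (mul_eq_zero.1 h₃).resolve_left (pow_ne_zero 2 hγ₃)
    refine ⟨(mul_eq_zero.1 ?_).resolve_left hγ₃, hy⟩
    linear_combination h₄ - γ₃ * γ₂ * hy
  · have hy : y = 0 := by
      have : γ₁ * γ₂ * (γ₁ - γ₂) * y = 0 := by linear_combination γ₂ * h₁ - γ₁ * h₂
      exact (mul_eq_zero.1 this).resolve_left
        (mul_ne_zero (mul_ne_zero hγ₁ hγ₂) (sub_ne_zero.2 hγ₁₂))
    refine ⟨(mul_eq_zero.1 ?_).resolve_left (mul_ne_zero two_ne_zero hγ₁), hy⟩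
    linear_combination h₁ - γ₁ ^ 2 * hy

lemma Fin.val_lt_or_eq_of_val_le {n k : ℕ} (hk : k < n) {i : Fin n} (hi : (i : ℕ) ≤ k) :
    (i : ℕ) < k ∨ i = ⟨k, hk⟩ :=
  hi.lt_or_eq.imp_right Fin.ext

namespace Matrix

variable {ι : Type*} [Fintype ι]

lemma det_rpow_smul_inv [DecidableEq ι] {σ : Matrix ι ι ℝ} (hσ : 0 < σ.det) (p : ℝ) :
    (σ.det ^ p • σ⁻¹).det = σ.det ^ (p * Fintype.card ι - 1) := by
  rw [det_smul, det_nonsing_inv, Ring.inverse_eq_inv', ← Real.rpow_mul_natCast hσ.le,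
    Real.rpow_sub_one hσ.ne', div_eq_mul_inv]

theorem eq_of_det_rpow_smul_inv_eq [DecidableEq ι] {p : ℝ} (hp : p * Fintype.card ι ≠ 1)
    {σ₁ σ₂ : Matrix ι ι ℝ} (hσ₁ : 0 < σ₁.det) (hσ₂ : 0 < σ₂.det)
    (h : σ₁.det ^ p • σ₁⁻¹ = σ₂.det ^ p • σ₂⁻¹) : σ₁ = σ₂ := by
  have hdet : σ₁.det = σ₂.det := by
    have := congrArg det h
    rwa [det_rpow_smul_inv hσ₁, det_rpow_smul_inv hσ₂,
      Real.rpow_left_inj hσ₁.le hσ₂.le (sub_ne_zero.2 hp)] at this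
  rw [hdet] at h
  exact inv_inj (smul_right_injective _ (Real.rpow_pos_of_pos hσ₂ p).ne' h)
    (isUnit_iff_ne_zero.2 hσ₁.ne')

def IsTotallyIsotropic (D : Matrix ι ι ℝ) (P : Submodule ℝ (ι → ℝ)) : Prop :=
  ∀ u ∈ P, ∀ v ∈ P, (D *ᵥ u) ⬝ᵥ v = 0

lemma isTotallyIsotropic_sub_iff {A B : Matrix ι ι ℝ} {P : Submodule ℝ (ι → ℝ)} :
    (A - B).IsTotallyIsotropic P ↔ ∀ u ∈ P, ∀ v ∈ P, (A *ᵥ u) ⬝ᵥ v = (B *ᵥ u) ⬝ᵥ v := by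
  simp only [IsTotallyIsotropic, sub_mulVec, sub_dotProduct, sub_eq_zero]

end Matrix

section TangentPlanes

variable {n : ℕ}

-- Indices are 0-based: `Pi.single ⟨n - 1, _⟩ 1` is the paper's `eₙ`.
def tangentPlane₁ (n : ℕ) : Submodule ℝ (Fin n → ℝ) :=
  Submodule.span ℝ {v | ∃ i : Fin n, (i : ℕ) < n - 1 ∧ v = Pi.single i 1}

def tangentPlane₂ (hn : 3 ≤ n) (γ₁ : ℝ) : Submodule ℝ (Fin n → ℝ) :=
  Submodule.span ℝ
    ({v | ∃ i : Fin n, (i : ℕ) < n - 2 ∧ v = Pi.single i 1} ∪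
      {Pi.single (⟨n - 2, Nat.sub_lt_self two_pos (Nat.le_of_succ_le hn)⟩ : Fin n) 1 +
        γ₁ • Pi.single (⟨n - 1, Nat.sub_lt_self one_pos (Nat.one_le_of_lt hn)⟩ : Fin n) 1})

def tangentPlane₃ (hn : 3 ≤ n) (γ₂ γ₃ : ℝ) : Submodule ℝ (Fin n → ℝ) :=
  Submodule.span ℝ
    ({v | ∃ i : Fin n, (i : ℕ) < n - 3 ∧ v = Pi.single i 1} ∪
      {Pi.single (⟨n - 3, Nat.sub_lt_self three_pos hn⟩ : Fin n) 1 +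
        γ₃ • Pi.single (⟨n - 1, Nat.sub_lt_self one_pos (Nat.one_le_of_lt hn)⟩ : Fin n) 1,
       Pi.single (⟨n - 2, Nat.sub_lt_self two_pos (Nat.le_of_succ_le hn)⟩ : Fin n) 1 +
        γ₂ • Pi.single (⟨n - 1, Nat.sub_lt_self one_pos (Nat.one_le_of_lt hn)⟩ : Fin n) 1})

lemma mulVec_single_add_smul_dotProduct (D : Matrix (Fin n) (Fin n) ℝ) (i j k l : Fin n)
    (α β : ℝ) :
    (D *ᵥ (Pi.single i 1 + α • Pi.single j 1)) ⬝ᵥ (Pi.single k 1 + β • Pi.single l 1)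
      = D k i + β * D l i + α * D k j + α * β * D l j := by
  simp only [mulVec_add, mulVec_smul, mulVec_single_one, dotProduct_add, dotProduct_smul,
    dotProduct_single_one, Pi.add_apply, Pi.smul_apply, col_apply, smul_eq_mul]
  ring

variable {D : Matrix (Fin n) (Fin n) ℝ}

lemma apply_eq_zero_of_isTotallyIsotropic_tangentPlane₁
    (h : D.IsTotallyIsotropic (tangentPlane₁ n)) {i j : Fin n}
    (hi : (i : ℕ) < n - 1) (hj : (j : ℕ) < n - 1) : D i j = 0 := by
  simpa [mulVec_single_one, dotProduct_single_one] using
    h _ (Submodule.subset_span ⟨j, hj, rfl⟩) _ (Submodule.subset_span ⟨i, hi, rfl⟩)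

theorem eq_zero_of_isTotallyIsotropic_tangentPlanes (hn : 3 ≤ n) {γ₁ γ₂ γ₃ : ℝ}
    (hΓ : (γ₁ ≠ 0 ∧ γ₃ ≠ 0) ∨ (γ₁ ≠ 0 ∧ γ₃ = 0 ∧ γ₂ ≠ 0 ∧ γ₁ ≠ γ₂)) (hD : D.IsSymm)
    (h₁ : D.IsTotallyIsotropic (tangentPlane₁ n))
    (h₂ : D.IsTotallyIsotropic (tangentPlane₂ hn γ₁))
    (h₃ : D.IsTotallyIsotropic (tangentPlane₃ hn γ₂ γ₃)) : D = 0 := by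
  have ha_lt : n - 1 < n := by omega
  have hb_lt : n - 2 < n := by omega
  set a : Fin n := ⟨n - 1, ha_lt⟩
  set b : Fin n := ⟨n - 2, hb_lt⟩
  set c : Fin n := ⟨n - 3, by omega⟩
  have hblock {i j : Fin n} (hi : (i : ℕ) < n - 1) (hj : (j : ℕ) < n - 1) : D i j = 0 :=
    apply_eq_zero_of_isTotallyIsotropic_tangentPlane₁ h₁ hi hj
  have hw : Pi.single b 1 + γ₁ • Pi.single a 1 ∈ tangentPlane₂ hn γ₁ :=
    Submodule.subset_span (Or.inr rfl)
  have hc : Pi.single c 1 + γ₃ • Pi.single a 1 ∈ tangentPlane₃ hn γ₂ γ₃ :=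
    Submodule.subset_span (Or.inr (Set.mem_insert _ _))
  have hb : Pi.single b 1 + γ₂ • Pi.single a 1 ∈ tangentPlane₃ hn γ₂ γ₃ :=
    Submodule.subset_span (Or.inr (Set.mem_insert_of_mem _ rfl))
  have hγ₁ : γ₁ ≠ 0 := by rcases hΓ with ⟨h, -⟩ | ⟨h, -⟩ <;> exact h
  have hrow {i : Fin n} (hi : (i : ℕ) < n - 2) : D a i = 0 := by
    have := h₂ _ (Submodule.subset_span (Or.inl ⟨i, hi, rfl⟩)) _ hw
    simp only [mulVec_single_one, dotProduct_add, dotProduct_smul, dotProduct_single_one,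
      col_apply, hblock (i := b) (show n - 2 < n - 1 by omega) (show (i : ℕ) < n - 1 by omega),
      smul_eq_mul, zero_add] at this
    exact (mul_eq_zero.1 this).resolve_left hγ₁
  obtain ⟨hab, haa⟩ : D a b = 0 ∧ D a a = 0 := by
    have hbb₀ : D b b = 0 := hblock (show n - 2 < n - 1 by omega) (show n - 2 < n - 1 by omega)
    have hbc₀ : D b c = 0 := hblock (show n - 2 < n - 1 by omega) (show n - 3 < n - 1 by omega)
    have hcc₀ : D c c = 0 := hblock (show n - 3 < n - 1 by omega) (show n - 3 < n - 1 by omega)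
    have hac : D a c = 0 := hrow (show n - 3 < n - 2 by omega)
    have hca : D c a = 0 := (hD.apply a c).trans hac
    have hba : D b a = D a b := hD.apply a b
    have hww := h₂ _ hw _ hw
    have hcc := h₃ _ hc _ hc
    have hbb := h₃ _ hb _ hb
    have hcb := h₃ _ hc _ hb
    simp only [mulVec_single_add_smul_dotProduct] at hww hcc hbb hcb
    refine eq_zero_of_nonflat hΓ ?_ ?_ ?_ ?_
    · linear_combination hww - hbb₀ - γ₁ * hba
    · linear_combination hbb - hbb₀ - γ₂ * hba
    · linear_combination hcc - hcc₀ - γ₃ * hac - γ₃ * hca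
    · linear_combination hcb - hbc₀ - γ₂ * hac - γ₃ * hba
  have hlast (j : Fin n) : D a j = 0 := by
    rcases Fin.val_lt_or_eq_of_val_le ha_lt (i := j) (by omega) with hj | rfl
    · rcases Fin.val_lt_or_eq_of_val_le hb_lt (i := j) (by omega) with hj | rfl
      exacts [hrow hj, hab]
    · exact haa
  ext i j
  rcases Fin.val_lt_or_eq_of_val_le ha_lt (i := i) (by omega) with hi | rfl
  · rcases Fin.val_lt_or_eq_of_val_le ha_lt (i := j) (by omega) with hj | rfl
    exacts [hblock hi hj, (hD.apply _ _).symm.trans (hlast i)]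
  · exact hlast j

end TangentPlanes

/-- Let `n ≥ 3` and `γ₁, γ₂, γ₃` satisfy the non-flatness condition (Γ).
If `σ₁, σ₂` are symmetric positive definite and the metrics `gᵢ = (det σᵢ)^(1/(n-2)) • σᵢ⁻¹`
have equal tangential components on the three tangent planes `Π₁, Π₂, Π₃`, then `σ₁ = σ₂`. -/
theorem conductivity_determined_by_tangential_metric (n : ℕ) (hn : 3 ≤ n)
    (γ₁ γ₂ γ₃ : ℝ)
    (hΓ : (γ₁ ≠ 0 ∧ γ₃ ≠ 0) ∨ (γ₁ ≠ 0 ∧ γ₃ = 0 ∧ γ₂ ≠ 0 ∧ γ₁ ≠ γ₂))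
    (σ₁ σ₂ : Matrix (Fin n) (Fin n) ℝ)
    (hσ₁ : σ₁.IsSymm) (hσ₁pd : σ₁.PosDef) (hσ₂ : σ₂.IsSymm) (hσ₂pd : σ₂.PosDef)
    (g₁ g₂ : Matrix (Fin n) (Fin n) ℝ)
    (hg₁ : g₁ = (σ₁.det ^ ((1 : ℝ) / ((n : ℝ) - 2))) • σ₁⁻¹)
    (hg₂ : g₂ = (σ₂.det ^ ((1 : ℝ) / ((n : ℝ) - 2))) • σ₂⁻¹)
    (P₁ P₂ P₃ : Submodule ℝ (Fin n → ℝ))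
    (hP₁ : P₁ = Submodule.span ℝ
      {v | ∃ i : Fin n, (i : ℕ) < n - 1 ∧ v = Pi.single i 1})
    (hP₂ : P₂ = Submodule.span ℝ
      ({v | ∃ i : Fin n, (i : ℕ) < n - 2 ∧ v = Pi.single i 1} ∪
        {(Pi.single (⟨n - 2, by omega⟩ : Fin n) 1 : Fin n → ℝ)
          + γ₁ • (Pi.single (⟨n - 1, by omega⟩ : Fin n) 1 : Fin n → ℝ)}))
    (hP₃ : P₃ = Submodule.span ℝ
      ({v | ∃ i : Fin n, (i : ℕ) < n - 3 ∧ v = Pi.single i 1} ∪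
        {(Pi.single (⟨n - 3, by omega⟩ : Fin n) 1 : Fin n → ℝ)
          + γ₃ • (Pi.single (⟨n - 1, by omega⟩ : Fin n) 1 : Fin n → ℝ),
         (Pi.single (⟨n - 2, by omega⟩ : Fin n) 1 : Fin n → ℝ)
          + γ₂ • (Pi.single (⟨n - 1, by omega⟩ : Fin n) 1 : Fin n → ℝ)}))
    (h1 : ∀ u ∈ P₁, ∀ v ∈ P₁, (g₁ *ᵥ u) ⬝ᵥ v = (g₂ *ᵥ u) ⬝ᵥ v)
    (h2 : ∀ u ∈ P₂, ∀ v ∈ P₂, (g₁ *ᵥ u) ⬝ᵥ v = (g₂ *ᵥ u) ⬝ᵥ v)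
    (h3 : ∀ u ∈ P₃, ∀ v ∈ P₃, (g₁ *ᵥ u) ⬝ᵥ v = (g₂ *ᵥ u) ⬝ᵥ v) :
    σ₁ = σ₂ := by
  subst hP₁ hP₂ hP₃
  have hg : g₁ = g₂ := by
    refine sub_eq_zero.1 (eq_zero_of_isTotallyIsotropic_tangentPlanes hn hΓ ?_
      (isTotallyIsotropic_sub_iff.2 h1) (isTotallyIsotropic_sub_iff.2 h2)
      (isTotallyIsotropic_sub_iff.2 h3))
    rw [hg₁, hg₂]
    exact (hσ₁.inv.smul _).sub (hσ₂.inv.smul _)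
  have hp : 1 / ((n : ℝ) - 2) * Fintype.card (Fin n) ≠ 1 := by
    have : (3 : ℝ) ≤ n := by exact_mod_cast hn
    rw [Fintype.card_fin, one_div_mul_eq_div, Ne, div_eq_one_iff_eq (by linarith)]
    linarith
  exact eq_of_det_rpow_smul_inv_eq hp hσ₁pd.det_pos hσ₂pd.det_pos (hg₁ ▸ hg₂ ▸ hg)
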